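/- Let (A, ▷, ◁) be an L-dendriform superalgebra over a field of characteristic zero. Then the product x • y := x▷y + x◁y, defined for homogeneous x, y ∈ A, makes (A, •) a pre-Lie superalgebra (the associated horizontal pre-Lie superalgebra of (A, ▷, ◁)). -/
import Mathlib


/-- The super sign `(−1)^{|x||y|}` for parities `i`, `j`. -/
def sgn (K : Type*) [Field K] (i j : ZMod 2) : K := (-1 : K) ^ (i.val * j.val)

/-- The horizontal product `x • y := x▷y + x◁y`. -/
def horz {K A : Type*} [Field K] [AddCommGroup A] [Module K A]
    (rt lt : A →ₗ[K] A →ₗ[K] A) (x y : A) : A := rt x y + lt x y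

/-- the product `x • y := x▷y + x◁y` of an L-dendriform superalgebra
`(A,▷,◁)` is a pre-Lie superalgebra product (the associated horizontal pre-Lie
superalgebra). -/
theorem stmt15 {K A : Type*} [Field K] [CharZero K] [AddCommGroup A] [Module K A]
    (𝒜 : ZMod 2 → Submodule K A) (hgr : DirectSum.IsInternal 𝒜)
    (rt lt : A →ₗ[K] A →ₗ[K] A)
    (hrt_even : ∀ (i j : ZMod 2), ∀ x ∈ 𝒜 i, ∀ y ∈ 𝒜 j, rt x y ∈ 𝒜 (i + j))
    (hlt_even : ∀ (i j : ZMod 2), ∀ x ∈ 𝒜 i, ∀ y ∈ 𝒜 j, lt x y ∈ 𝒜 (i + j))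
    (hLD1 : ∀ (i j k : ZMod 2), ∀ x ∈ 𝒜 i, ∀ y ∈ 𝒜 j, ∀ z ∈ 𝒜 k,
      rt x (rt y z)
        = rt (rt x y) z + rt (lt x y) z + sgn K i j • rt y (rt x z)
          - sgn K i j • rt (lt y x) z - sgn K i j • rt (rt y x) z)
    (hLD2 : ∀ (i j k : ZMod 2), ∀ x ∈ 𝒜 i, ∀ y ∈ 𝒜 j, ∀ z ∈ 𝒜 k,
      rt x (lt y z)
        = lt (rt x y) z + sgn K i j • lt y (rt x z)
          + sgn K i j • lt y (lt x z) - sgn K i j • lt (lt y x) z) :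
    -- • is even
    (∀ (i j : ZMod 2), ∀ x ∈ 𝒜 i, ∀ y ∈ 𝒜 j, horz rt lt x y ∈ 𝒜 (i + j)) ∧
    -- pre-Lie super-identity for •
    (∀ (i j k : ZMod 2), ∀ x ∈ 𝒜 i, ∀ y ∈ 𝒜 j, ∀ z ∈ 𝒜 k,
      horz rt lt (horz rt lt x y) z - horz rt lt x (horz rt lt y z)
        = sgn K i j • (horz rt lt (horz rt lt y x) z
            - horz rt lt y (horz rt lt x z))) := by
  constructor
  · intro i j x hx y hy
    exact (𝒜 (i + j)).add_mem (hrt_even i j x hx y hy) (hlt_even i j x hx y hy)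
  · intro i j k x hx y hy z hz
    have hs : sgn K j i = sgn K i j := by simp [sgn, Nat.mul_comm]
    have hpm : sgn K i j = 1 ∨ sgn K i j = -1 := by
      rcases Nat.even_or_odd (i.val * j.val) with he | ho
      · exact Or.inl (Even.neg_one_pow he)
      · exact Or.inr (Odd.neg_one_pow ho)
    have h1 := hLD1 i j k x hx y hy z hz
    have h2 := hLD2 i j k x hx y hy z hz
    have h3 := hLD2 j i k y hy x hx z hz
    rw [hs] at h3
    simp only [horz, map_add, LinearMap.add_apply]
    rcases hpm with h | h <;> rw [h] at h1 h2 h3 ⊢ <;> rw [h1, h2, h3] <;>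
      match_scalars <;> ring
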